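/- arXiv:0801.2605 — 2 statements merged into one kernel-verified Lean document; each statement's English description precedes it below -/
import Mathlib

section
/- Let n ≥ 1. The function F(λ) = (1+nλ⁴)/(n+2−λ²), defined for 0 < λ² < n+2, satisfies F(λ) = λ² if and only if λ² = 1 or λ² = 1/(n+1); moreover F(λ) < λ² for 1/(n+1) < λ² < 1 and F(λ) > λ² for λ² > 1 (with λ² < n+2). -/
/-!
Clearing the positive denominator, `F(λ) - λ²` has the sign of
`1 + nλ⁴ - λ²(n + 2 - λ²) = (λ² - 1)((n + 1)λ² - 1)`, whose roots are `λ² = 1` and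
`λ² = 1/(n + 1)`.
-/

noncomputable def ricciParam (a lam : ℝ) : ℝ := (1 + a * lam ^ 4) / (a + 2 - lam ^ 2)

section

variable {a lam : ℝ}

theorem ricciParam_sub_sq (h : lam ^ 2 < a + 2) :
    ricciParam a lam - lam ^ 2 =
      (lam ^ 2 - 1) * ((a + 1) * lam ^ 2 - 1) / (a + 2 - lam ^ 2) := by
  have hd : a + 2 - lam ^ 2 ≠ 0 := by linarith
  unfold ricciParam
  field_simp
  ring

theorem ricciParam_eq_sq_iff (ha : 0 < a + 1) (h : lam ^ 2 < a + 2) :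
    ricciParam a lam = lam ^ 2 ↔ lam ^ 2 = 1 ∨ lam ^ 2 = 1 / (a + 1) := by
  have hd : a + 2 - lam ^ 2 ≠ 0 := by linarith
  rw [← sub_eq_zero, ricciParam_sub_sq h, div_eq_zero_iff, or_iff_left hd, mul_eq_zero,
    sub_eq_zero, sub_eq_zero, eq_div_iff ha.ne', mul_comm]

theorem ricciParam_lt_sq (ha : 0 < a + 1) (h : lam ^ 2 < a + 2)
    (h₁ : 1 / (a + 1) < lam ^ 2) (h₂ : lam ^ 2 < 1) : ricciParam a lam < lam ^ 2 := by
  have h₁' : 1 < (a + 1) * lam ^ 2 := by rwa [div_lt_iff₀' ha] at h₁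
  rw [← sub_neg, ricciParam_sub_sq h]
  exact div_neg_of_neg_of_pos (mul_neg_of_neg_of_pos (by linarith) (by linarith))
    (by linarith)

theorem sq_lt_ricciParam (ha : 0 ≤ a) (h : lam ^ 2 < a + 2) (h₁ : 1 < lam ^ 2) :
    lam ^ 2 < ricciParam a lam := by
  have h₁' : 1 < (a + 1) * lam ^ 2 := by nlinarith
  rw [← sub_pos, ricciParam_sub_sq h]
  exact div_pos (mul_pos (by linarith) (by linarith)) (by linarith)

end

theorem stmt9_general (n : ℕ) (lam : ℝ)
    (hlt : lam ^ 2 < (n : ℝ) + 2) :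
    ((1 + (n : ℝ) * lam ^ 4) / ((n : ℝ) + 2 - lam ^ 2) = lam ^ 2 ↔
      lam ^ 2 = 1 ∨ lam ^ 2 = 1 / ((n : ℝ) + 1)) ∧
    (1 / ((n : ℝ) + 1) < lam ^ 2 → lam ^ 2 < 1 →
      (1 + (n : ℝ) * lam ^ 4) / ((n : ℝ) + 2 - lam ^ 2) < lam ^ 2) ∧
    (1 < lam ^ 2 →
      lam ^ 2 < (1 + (n : ℝ) * lam ^ 4) / ((n : ℝ) + 2 - lam ^ 2)) := by
  have hn : (0 : ℝ) ≤ n := n.cast_nonneg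
  have hn₁ : (0 : ℝ) < n + 1 := by linarith
  exact ⟨ricciParam_eq_sq_iff hn₁ hlt, ricciParam_lt_sq hn₁ hlt, sq_lt_ricciParam hn hlt⟩

/-- The Ricci-map parameter function `F(λ) = (1+nλ⁴)/(n+2−λ²)` on `0 < λ² < n+2`
satisfies `F(λ) = λ²` iff `λ² = 1` or `λ² = 1/(n+1)`, with `F(λ) < λ²` for
`1/(n+1) < λ² < 1` and `F(λ) > λ²` for `λ² > 1`. -/
theorem stmt9 (n : ℕ) (hn : 1 ≤ n) (lam : ℝ) (hlam : 0 < lam)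
    (hlt : lam ^ 2 < (n : ℝ) + 2) :
    ((1 + (n : ℝ) * lam ^ 4) / ((n : ℝ) + 2 - lam ^ 2) = lam ^ 2 ↔
      lam ^ 2 = 1 ∨ lam ^ 2 = 1 / ((n : ℝ) + 1)) ∧
    (1 / ((n : ℝ) + 1) < lam ^ 2 → lam ^ 2 < 1 →
      (1 + (n : ℝ) * lam ^ 4) / ((n : ℝ) + 2 - lam ^ 2) < lam ^ 2) ∧
    (1 < lam ^ 2 →
      lam ^ 2 < (1 + (n : ℝ) * lam ^ 4) / ((n : ℝ) + 2 - lam ^ 2)) :=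
  stmt9_general n lam hlt
end

section
/- For a cyclic permutation (μ,η,ν) of (1,2,3), suppose 1-forms α₁,α₂,α₃ and ℝⁿ-valued 1-forms X⁰,X¹,X²,X³ satisfy dα_μ − 2α_η∧α_ν = 2(ᵗX^μ∧X⁰ + ᵗX^η∧X^ν). Then the complex-valued 1-form ζ⁰ = α₁ + iα₃ satisfies dζ⁰ = −2iα₂∧ζ⁰ + ᵗZ²∧Z¹ − ᵗZ¹∧Z², where Z¹ = X⁰+iX² and Z² = X¹+iX³. -/
/-!
Since `I² = -1` and the components of `X` anticommute, the commutator
`Z²Z¹ - Z¹Z²` of `Z¹ = X⁰ + iX²` and `Z² = X¹ + iX³` is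
`2(X¹X⁰ + X²X³) + 2i(X³X⁰ + X¹X²)`, i.e. the right-hand side of the structure equation for `dα₁`
plus `i` times that for `dα₃`. The remaining terms `2α₂α₃ + 2iα₁α₂` of `dα₁ + i dα₃` are
`-2iα₂(α₁ + iα₃)` once `α₂α₁ = -α₁α₂`.
-/

open Complex

section Anticommuting

variable {Ω : Type*} [Ring Ω] [Algebra ℂ Ω]

theorem add_I_smul_mul_sub_mul_of_anticomm {x₀ x₁ x₂ x₃ : Ω}
    (h₀₁ : x₀ * x₁ = -(x₁ * x₀)) (h₀₃ : x₀ * x₃ = -(x₃ * x₀))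
    (h₂₁ : x₂ * x₁ = -(x₁ * x₂)) (h₃₂ : x₃ * x₂ = -(x₂ * x₃)) :
    (x₁ + I • x₃) * (x₀ + I • x₂) - (x₀ + I • x₂) * (x₁ + I • x₃) =
      (2 : ℂ) • (x₁ * x₀ + x₂ * x₃) + (2 * I) • (x₃ * x₀ + x₁ * x₂) := by
  simp only [mul_add, add_mul, smul_mul_assoc, mul_smul_comm, h₀₁, h₀₃, h₂₁, h₃₂]
  match_scalars <;> grind [I_sq]

end Anticommuting

theorem stmt19_general (nn : ℕ) (Ω : Type*) [Ring Ω] [Algebra ℂ Ω]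
    (d : Ω →ₗ[ℂ] Ω) (a1 a2 a3 : Ω) (X : Fin 4 → Fin nn → Ω)
    (hanti : ∀ x ∈ ({a1, a2, a3} : Set Ω) ∪ {z | ∃ i b, z = X i b},
             ∀ y ∈ ({a1, a2, a3} : Set Ω) ∪ {z | ∃ i b, z = X i b},
             x * y = -(y * x))
    (h1 : d a1 - (2 : ℂ) • (a2 * a3) =
      (2 : ℂ) • (∑ b, (X 1 b * X 0 b + X 2 b * X 3 b)))
    (h3 : d a3 - (2 : ℂ) • (a1 * a2) =
      (2 : ℂ) • (∑ b, (X 3 b * X 0 b + X 1 b * X 2 b))) :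
    d (a1 + Complex.I • a3) =
      (-(2 * Complex.I)) • (a2 * (a1 + Complex.I • a3)) +
        ∑ b, ((X 1 b + Complex.I • X 3 b) * (X 0 b + Complex.I • X 2 b) -
              (X 0 b + Complex.I • X 2 b) * (X 1 b + Complex.I • X 3 b)) := by
  have antiX (i j : Fin 4) (b : Fin nn) : X i b * X j b = -(X j b * X i b) :=
    hanti _ (Or.inr ⟨i, b, rfl⟩) _ (Or.inr ⟨j, b, rfl⟩)
  have anti₂₁ : a2 * a1 = -(a1 * a2) := hanti _ (Or.inl (by simp)) _ (Or.inl (by simp))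
  rw [map_add, map_smul, sub_eq_iff_eq_add.mp h1, sub_eq_iff_eq_add.mp h3, mul_add,
    mul_smul_comm, anti₂₁]
  simp only [add_I_smul_mul_sub_mul_of_anticomm (antiX 0 1 _) (antiX 0 3 _) (antiX 2 1 _)
    (antiX 3 2 _), Finset.sum_add_distrib, ← Finset.smul_sum]
  match_scalars <;> grind [I_sq]

/-- Formula (2-13): if the 1-forms `α₁,α₂,α₃` and the `ℝⁿ`-valued 1-forms
`X⁰,X¹,X²,X³` (all mutually anticommuting) satisfy
`dα_μ − 2α_η∧α_ν = 2(ᵗX^μ∧X⁰ + ᵗX^η∧X^ν)` for each cyclic permutation `(μ,η,ν)` of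
`(1,2,3)`, then `ζ⁰ = α₁ + iα₃` satisfies
`dζ⁰ = −2iα₂∧ζ⁰ + ᵗZ²∧Z¹ − ᵗZ¹∧Z²` with `Z¹ = X⁰+iX²`, `Z² = X¹+iX³`. -/
theorem stmt19 (nn : ℕ) (Ω : Type*) [Ring Ω] [Algebra ℂ Ω]
    (d : Ω →ₗ[ℂ] Ω) (a1 a2 a3 : Ω) (X : Fin 4 → Fin nn → Ω)
    (hanti : ∀ x ∈ ({a1, a2, a3} : Set Ω) ∪ {z | ∃ i b, z = X i b},
             ∀ y ∈ ({a1, a2, a3} : Set Ω) ∪ {z | ∃ i b, z = X i b},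
             x * y = -(y * x))
    (h1 : d a1 - (2 : ℂ) • (a2 * a3) =
      (2 : ℂ) • (∑ b, (X 1 b * X 0 b + X 2 b * X 3 b)))
    (h2 : d a2 - (2 : ℂ) • (a3 * a1) =
      (2 : ℂ) • (∑ b, (X 2 b * X 0 b + X 3 b * X 1 b)))
    (h3 : d a3 - (2 : ℂ) • (a1 * a2) =
      (2 : ℂ) • (∑ b, (X 3 b * X 0 b + X 1 b * X 2 b))) :
    d (a1 + Complex.I • a3) =
      (-(2 * Complex.I)) • (a2 * (a1 + Complex.I • a3)) +
        ∑ b, ((X 1 b + Complex.I • X 3 b) * (X 0 b + Complex.I • X 2 b) -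
              (X 0 b + Complex.I • X 2 b) * (X 1 b + Complex.I • X 3 b)) :=
  stmt19_general nn Ω d a1 a2 a3 X hanti h1 h3
end
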